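/- Let A be a normed division algebra. Then for all a, b, c ∈ A one has: a*(conj(b)*c) + b*(conj(a)*c) = 2⟨a,b⟩ • c, (a*conj(b))*c + (a*conj(c))*b = 2⟨b,c⟩ • a, and a*conj(b) + b*conj(a) = 2⟨a,b⟩ • 1. -/

import Mathlib

/-!
Since `‖a * c‖ = ‖a‖ ‖c‖`, polarizing `‖(a + b) * c‖²` and then `c` gives
`⟪a c, b d⟫ + ⟪a d, b c⟫ = 2 ⟪a, b⟫ ⟪c, d⟫`. Putting `1` in one slot shows that the adjoint of
left (right) multiplication by `a` is left (right) multiplication by `conj a`; pairing each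
identity with an arbitrary `d` and moving the outer factor across the inner product turns it
into an instance of the polarized identity.
-/

open scoped RealInnerProductSpace

/-- A normed division algebra: a real inner product space with an `ℝ`-bilinear
multiplication (not necessarily associative or commutative), a two-sided
multiplicative identity `one ≠ 0`, satisfying `‖a*b‖ = ‖a‖ * ‖b‖`. -/
structure NormedDivisionAlgebra (A : Type*) [NormedAddCommGroup A] [InnerProductSpace ℝ A] where
  mul : A →ₗ[ℝ] A →ₗ[ℝ] A
  one : A
  one_ne_zero : one ≠ 0
  one_mul : ∀ a : A, mul one a = a
  mul_one : ∀ a : A, mul a one = a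
  norm_mul : ∀ a b : A, ‖mul a b‖ = ‖a‖ * ‖b‖

namespace NormedDivisionAlgebra

variable {A : Type*} [NormedAddCommGroup A] [InnerProductSpace ℝ A]

/-- `Re a`: the orthogonal projection of `a` onto the real part `Re A = ℝ · 1`. -/
noncomputable def re (D : NormedDivisionAlgebra A) (a : A) : A :=
  (⟪a, D.one⟫ / ‖D.one‖ ^ 2) • D.one

/-- `Im a`: the orthogonal projection of `a` onto the imaginary part `Im A = (ℝ · 1)ᗮ`. -/
noncomputable def im (D : NormedDivisionAlgebra A) (a : A) : A := a - D.re a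

/-- The conjugate `conj a = Re a - Im a`. -/
noncomputable def conj (D : NormedDivisionAlgebra A) (a : A) : A := D.re a - D.im a

/-- The real part `Re A = ℝ · 1` as a submodule. -/
def ReSub (D : NormedDivisionAlgebra A) : Submodule ℝ A := Submodule.span ℝ {D.one}

/-- The imaginary part `Im A = (ℝ · 1)ᗮ` as a submodule. -/
noncomputable def ImSub (D : NormedDivisionAlgebra A) : Submodule ℝ A := (Submodule.span ℝ {D.one})ᗮ

/-- The commutator `[a, b] = a*b - b*a`. -/
def comm (D : NormedDivisionAlgebra A) (a b : A) : A := D.mul a b - D.mul b a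

/-- The associator `[a, b, c] = (a*b)*c - a*(b*c)`. -/
def assoc (D : NormedDivisionAlgebra A) (a b c : A) : A :=
  D.mul (D.mul a b) c - D.mul a (D.mul b c)

/-- The cross product `a × b = Im (a*b)` (intended for `a, b ∈ Im A`). -/
noncomputable def cross (D : NormedDivisionAlgebra A) (a b : A) : A := D.im (D.mul a b)

end NormedDivisionAlgebra

namespace NormedDivisionAlgebra

variable {A : Type*} [NormedAddCommGroup A] [InnerProductSpace ℝ A] (D : NormedDivisionAlgebra A)

theorem norm_one : ‖D.one‖ = 1 := by
  have h := D.norm_mul D.one D.one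
  rw [D.one_mul] at h
  exact (mul_eq_left₀ (norm_ne_zero_iff.mpr D.one_ne_zero)).mp h.symm

theorem conj_eq (a : A) : D.conj a = (2 * ⟪a, D.one⟫) • D.one - a := by
  simp only [conj, im, re, norm_one, one_pow, div_one]
  module

theorem inner_conj_conj (a b : A) : ⟪D.conj a, D.conj b⟫ = ⟪a, b⟫ := by
  have h_one : ⟪D.one, D.one⟫ = (1 : ℝ) := by
    rw [real_inner_self_eq_norm_sq, norm_one, one_pow]
  simp only [conj_eq, inner_sub_left, inner_sub_right, real_inner_smul_left,
    real_inner_smul_right, h_one, real_inner_comm D.one b]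
  ring

theorem inner_mul_right_mul_right (a b c : A) :
    ⟪D.mul a c, D.mul b c⟫ = ⟪a, b⟫ * ‖c‖ ^ 2 := by
  have h : ‖D.mul a c + D.mul b c‖ ^ 2 = (‖a + b‖ * ‖c‖) ^ 2 := by
    rw [← LinearMap.add_apply, ← map_add, D.norm_mul]
  rw [mul_pow, norm_add_sq_real, norm_add_sq_real, D.norm_mul, D.norm_mul] at h
  linear_combination h / 2

theorem inner_mul_mul_add_inner_mul_mul (a b c d : A) :
    ⟪D.mul a c, D.mul b d⟫ + ⟪D.mul a d, D.mul b c⟫ = 2 * ⟪a, b⟫ * ⟪c, d⟫ := by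
  have h := D.inner_mul_right_mul_right a b (c + d)
  rw [map_add, map_add, inner_add_left, inner_add_right, inner_add_right,
    norm_add_sq_real] at h
  linear_combination h - D.inner_mul_right_mul_right a b c - D.inner_mul_right_mul_right a b d

theorem inner_mul_left (a b c : A) : ⟪D.mul a b, c⟫ = ⟪b, D.mul (D.conj a) c⟫ := by
  have h := D.inner_mul_mul_add_inner_mul_mul a D.one b c
  rw [D.one_mul, D.one_mul] at h
  rw [conj_eq, map_sub, LinearMap.sub_apply, map_smul, LinearMap.smul_apply, D.one_mul,
    inner_sub_right, real_inner_smul_right]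
  linear_combination h + real_inner_comm (D.mul a c) b

theorem inner_mul_right (a b c : A) : ⟪D.mul a c, b⟫ = ⟪a, D.mul b (D.conj c)⟫ := by
  have h := D.inner_mul_mul_add_inner_mul_mul a b c D.one
  rw [D.mul_one, D.mul_one] at h
  rw [conj_eq, map_sub, map_smul, D.mul_one, inner_sub_right, real_inner_smul_right]
  linear_combination h

theorem mul_conj_mul_add_mul_conj_mul (a b c : A) :
    D.mul a (D.mul (D.conj b) c) + D.mul b (D.mul (D.conj a) c) = (2 * ⟪a, b⟫) • c := by
  refine ext_inner_right ℝ fun d => ?_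
  rw [inner_add_left, D.inner_mul_left a, D.inner_mul_left b, real_inner_smul_left]
  have h := D.inner_mul_mul_add_inner_mul_mul (D.conj b) (D.conj a) c d
  rw [inner_conj_conj] at h
  linear_combination h - 2 * ⟪c, d⟫ * real_inner_comm b a
    - real_inner_comm (D.mul (D.conj a) c) (D.mul (D.conj b) d)

theorem mul_mul_conj_add_mul_mul_conj (a b c : A) :
    D.mul (D.mul a (D.conj b)) c + D.mul (D.mul a (D.conj c)) b = (2 * ⟪b, c⟫) • a := by
  refine ext_inner_right ℝ fun d => ?_
  rw [inner_add_left, D.inner_mul_right _ d c, D.inner_mul_right _ d b, real_inner_smul_left]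
  have h := D.inner_mul_mul_add_inner_mul_mul a d (D.conj b) (D.conj c)
  rw [inner_conj_conj] at h
  linear_combination h

end NormedDivisionAlgebra

theorem nda_polarized_identities {A : Type*} [NormedAddCommGroup A] [InnerProductSpace ℝ A]
    (D : NormedDivisionAlgebra A) (a b c : A) :
    D.mul a (D.mul (D.conj b) c) + D.mul b (D.mul (D.conj a) c) = (2 * ⟪a, b⟫) • c ∧
      D.mul (D.mul a (D.conj b)) c + D.mul (D.mul a (D.conj c)) b = (2 * ⟪b, c⟫) • a ∧
      D.mul a (D.conj b) + D.mul b (D.conj a) = (2 * ⟪a, b⟫) • D.one := by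
  refine ⟨D.mul_conj_mul_add_mul_conj_mul a b c, D.mul_mul_conj_add_mul_mul_conj a b c, ?_⟩
  simpa only [D.mul_one] using D.mul_conj_mul_add_mul_conj_mul a b D.one
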